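/- arXiv:2603.08243 — 6 statements merged into one kernel-verified Lean document; each statement's English description precedes it below -/
import Mathlib

section
/- Let f : ℕ × ℕ → ℝ be decreasing in its second variable, i.e. f(m,n₂) ≤ f(m,n₁) whenever n₁ ≤ n₂, and suppose the series ∑_{m∈ℕ} f(m,0) converges absolutely. For each n define S(n) := (∑_m f(m,0)) − ∑_m (f(m,0) − f(m,n)) ∈ ℝ ∪ {−∞}, where the second sum of nonnegative terms is taken in [0,∞] and r − ∞ := −∞. Then lim_{n→∞} S(n) exists in ℝ ∪ {−∞} and equals ∑_m (lim_{n→∞} f(m,n)) interpreted the same way; equivalently ⨅_n S(n) = (∑_m f(m,0)) − ∑_m ⨆_n (f(m,0) − f(m,n)). The common value is not necessarily finite. -/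
/-!
Writing `gₘ(n) := (f(m,0) - f(m,n))⁺ ∈ [0,∞]`, each `gₘ` is monotone, so by monotone convergence
for sums in `[0,∞]` the sums `∑ₘ gₘ(n)` increase to `∑ₘ ⨆ₙ gₘ(n)`. The map `x ↦ c - x` from
`[0,∞]` to `ℝ ∪ {±∞}` is antitone and continuous for `c = ∑ₘ f(m,0)` real, so it turns this supremum into
the infimum of the decreasing sequence `S n`, which is also its limit.
-/

open Filter Topology
open scoped ENNReal NNReal

namespace ENNReal

theorem tsum_iSup_of_monotone {α ι : Type*} [Preorder ι] [IsDirectedOrder ι]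
    {f : α → ι → ℝ≥0∞} (hf : ∀ a, Monotone (f a)) :
    ∑' a, ⨆ i, f a i = ⨆ i, ∑' a, f a i :=
  calc ∑' a, ⨆ i, f a i
      = ⨆ s : Finset α, ∑ a ∈ s, ⨆ i, f a i := ENNReal.tsum_eq_iSup_sum
    _ = ⨆ s : Finset α, ⨆ i, ∑ a ∈ s, f a i :=
        iSup_congr fun _ => ENNReal.finsetSum_iSup_of_monotone hf
    _ = ⨆ i, ⨆ s : Finset α, ∑ a ∈ s, f a i := iSup_comm
    _ = ⨆ i, ∑' a, f a i := iSup_congr fun _ => ENNReal.tsum_eq_iSup_sum.symm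

end ENNReal

namespace EReal

theorem coe_tsum {α : Type*} {f : α → ℝ} (hf : Summable f) :
    ((∑' a, f a : ℝ) : EReal) = ∑' a, (f a : EReal) :=
  let coeHom : ℝ →+ EReal := ⟨⟨((↑) : ℝ → EReal), coe_zero⟩, coe_add⟩
  (hf.hasSum.map coeHom continuous_coe_real_ereal).tsum_eq.symm

theorem continuous_coe_sub (c : ℝ) : Continuous fun x : EReal => (c : EReal) - x := by
  simp_rw [sub_eq_add_neg]
  exact continuous_iff_continuousAt.2 fun _ =>
    (EReal.continuousAt_add (Or.inl (coe_ne_top c)) (Or.inl (coe_ne_bot c))).comp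
      (continuous_const.prodMk continuous_neg).continuousAt

theorem coe_sub_coe_ennreal_iSup {ι : Sort*} [Nonempty ι] (c : ℝ) (g : ι → ℝ≥0∞) :
    (c : EReal) - ((⨆ i, g i : ℝ≥0∞) : EReal) = ⨅ i, (c : EReal) - (g i : EReal) :=
  Antitone.map_ciSup_of_continuousAt
    ((continuous_coe_sub c).comp continuous_coe_ennreal_ereal).continuousAt
    fun _ _ h => sub_le_sub le_rfl (coe_ennreal_le_coe_ennreal_iff.2 h)

end EReal

/-- **Interchange of limits lemma.** Let `f : ℕ × ℕ → ℝ` be decreasing in its second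
variable, with `∑ m, f (m, 0)` absolutely convergent.  Define
`S n := (∑ m, f (m, 0)) − ∑ m, (f (m, 0) − f (m, n))`, where the second sum of
nonnegative terms is taken in `[0, ∞]` and subtraction is in `EReal = ℝ ∪ {±∞}`
(so `r − ∞ = −∞`).  Then `S n` tends to its infimum, and this infimum equals
`∑ m, (lim_n f (m, n))` interpreted the same way, namely
`(∑ m, f (m, 0)) − ∑ m, ⨆ n, (f (m, 0) − f (m, n))`. -/
theorem stmt0 (f : ℕ × ℕ → ℝ)
    (hmono : ∀ m n₁ n₂, n₁ ≤ n₂ → f (m, n₂) ≤ f (m, n₁))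
    (hsum : Summable fun m => |f (m, 0)|)
    (S : ℕ → EReal)
    (hS : ∀ n, S n = ((∑' m, f (m, 0)) : EReal)
        - (((∑' m, ENNReal.ofReal (f (m, 0) - f (m, n))) : ℝ≥0∞) : EReal)) :
    Tendsto S atTop (𝓝 (⨅ n, S n)) ∧
      (⨅ n, S n) = ((∑' m, f (m, 0)) : EReal)
        - (((∑' m, ⨆ n, ENNReal.ofReal (f (m, 0) - f (m, n))) : ℝ≥0∞) : EReal) := by
  set g : ℕ → ℕ → ℝ≥0∞ := fun m n => ENNReal.ofReal (f (m, 0) - f (m, n))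
  have hg : ∀ m, Monotone (g m) := fun m n₁ n₂ h =>
    ENNReal.ofReal_le_ofReal (by linarith [hmono m n₁ n₂ h])
  have hS' : ∀ n, S n = ((∑' m, f (m, 0) : ℝ) : EReal) - ((∑' m, g m n : ℝ≥0∞) : EReal) := by
    intro n
    rw [hS, EReal.coe_tsum hsum.of_abs]
  have hanti : Antitone S := fun n₁ n₂ h => by
    rw [hS', hS']
    exact EReal.sub_le_sub le_rfl
      (EReal.coe_ennreal_le_coe_ennreal_iff.2 (ENNReal.tsum_le_tsum fun m => hg m h))
  refine ⟨tendsto_atTop_iInf hanti, ?_⟩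
  rw [← EReal.coe_tsum hsum.of_abs, ENNReal.tsum_iSup_of_monotone hg,
    EReal.coe_sub_coe_ennreal_iSup]
  exact iInf_congr hS'
end

section
/- Let Δ and Δ_n (n ∈ ℕ) be nonempty compact convex subsets of Euclidean space ℝ^d, with concave support functions Ψ(x) = inf_{y∈Δ} ⟨y,x⟩ and Ψ_n(x) = inf_{y∈Δ_n} ⟨y,x⟩. Assume Δ has nonempty interior and that sup_{‖x‖≤1} |Ψ_n(x) − Ψ(x)| → 0. Then for every ε > 0 there is n_ε such that for all n ≥ n_ε one has Δ_ε ⊆ Δ_n, where Δ_ε := convexHull{y ∈ Δ : dist(y, frontier Δ) ≥ ε}. -/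
open scoped RealInnerProductSpace Pointwise

/-- The concave support function of a set `A ⊆ ℝ^d` : `Ψ_A(x) = inf_{y ∈ A} ⟨y, x⟫`. -/
noncomputable def suppFun {d : ℕ} (A : Set (EuclideanSpace ℝ (Fin d)))
    (x : EuclideanSpace ℝ (Fin d)) : ℝ :=
  sInf ((fun y => ⟪y, x⟫) '' A)

/-!
If `dist(y, ∂Δ) ≥ ε` then the closed `ε`-ball around `y` lies in `Δ` (a ball meeting `Δ` but not
its frontier stays inside `Δ`, by connectedness), so `Ψ(x) ≤ ⟨y, x⟩ - ε` for every unit `x`.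
Once `Ψ_n` is uniformly `ε`-close to `Ψ`, this gives `Ψ_n(x) ≤ ⟨y, x⟩` for every unit `x`, and by
Hahn–Banach separation that forces `y ∈ Δ_n`; convexity of `Δ_n` then absorbs the hull.
-/

open Metric Set

theorem IsPreconnected.subset_of_disjoint_frontier {X : Type*} [TopologicalSpace X]
    {s t : Set X} (hs : IsPreconnected s) (hst : (s ∩ t).Nonempty)
    (hfr : Disjoint s (frontier t)) : s ⊆ t := by
  have hcover : s ⊆ interior t ∪ (closure t)ᶜ := fun z hz => by
    by_cases hzt : z ∈ interior t
    · exact Or.inl hzt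
    · exact Or.inr fun hzc => hfr.notMem_of_mem_left hz ⟨hzc, hzt⟩
  obtain ⟨z, hzs, hzt⟩ := hst
  have hz : z ∈ interior t := (hcover hzs).resolve_right (not_not.2 (subset_closure hzt))
  exact (hs.subset_left_of_subset_union isOpen_interior isClosed_closure.isOpen_compl
    (disjoint_compl_right.mono_left interior_subset_closure) hcover ⟨z, hzs, hz⟩).trans
    interior_subset

theorem ball_infDist_frontier_subset {E : Type*} [NormedAddCommGroup E] [NormedSpace ℝ E]
    {s : Set E} {y : E} (hy : y ∈ s) : ball y (infDist y (frontier s)) ⊆ s := by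
  rcases le_or_gt (infDist y (frontier s)) 0 with h | h
  · simp [ball_eq_empty.2 h]
  · exact (convex_ball y _).isPreconnected.subset_of_disjoint_frontier
      ⟨y, mem_ball_self h, hy⟩ disjoint_ball_infDist

theorem IsClosed.closedBall_subset_of_le_infDist_frontier {E : Type*} [NormedAddCommGroup E]
    [NormedSpace ℝ E] {s : Set E} (hs : IsClosed s) {y : E} (hy : y ∈ s) {ε : ℝ} (hε : 0 < ε)
    (h : ε ≤ infDist y (frontier s)) : closedBall y ε ⊆ s :=
  calc closedBall y ε ⊆ closedBall y (infDist y (frontier s)) := closedBall_subset_closedBall h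
    _ = closure (ball y (infDist y (frontier s))) := (closure_ball y (hε.trans_le h).ne').symm
    _ ⊆ s := closure_minimal (ball_infDist_frontier_subset hy) hs

section SupportFunction

variable {d : ℕ} {A : Set (EuclideanSpace ℝ (Fin d))}

theorem suppFun_le_inner (hA : IsCompact A) {z : EuclideanSpace ℝ (Fin d)} (hz : z ∈ A)
    (x : EuclideanSpace ℝ (Fin d)) : suppFun A x ≤ ⟪z, x⟫ :=
  csInf_le (hA.image (continuous_id.inner continuous_const)).bddBelow ⟨z, hz, rfl⟩

theorem suppFun_le_inner_sub_of_closedBall_subset (hA : IsCompact A)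
    {y : EuclideanSpace ℝ (Fin d)} {ε : ℝ} (hε : 0 ≤ ε) (hball : closedBall y ε ⊆ A)
    {x : EuclideanSpace ℝ (Fin d)} (hx : ‖x‖ = 1) : suppFun A x ≤ ⟪y, x⟫ - ε := by
  have hmem : y - ε • x ∈ A := hball <| by
    simp [norm_smul, hx, abs_of_nonneg hε]
  simpa [inner_sub_left, real_inner_smul_left, real_inner_self_eq_norm_sq, hx]
    using suppFun_le_inner hA hmem x

theorem exists_norm_eq_one_inner_lt_suppFun (hAc : IsClosed A) (hAconv : Convex ℝ A)
    (hAne : A.Nonempty) {y : EuclideanSpace ℝ (Fin d)} (hy : y ∉ A) :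
    ∃ x : EuclideanSpace ℝ (Fin d), ‖x‖ = 1 ∧ ⟪y, x⟫ < suppFun A x := by
  obtain ⟨f, u, hfy, hfA⟩ := geometric_hahn_banach_point_closed hAconv hAc hy
  set v := (InnerProductSpace.toDual ℝ (EuclideanSpace ℝ (Fin d))).symm f
  have hfv : ∀ z, f z = ⟪v, z⟫ := fun z => InnerProductSpace.toDual_symm_apply.symm
  have hv : ∀ z, ⟪z, ‖v‖⁻¹ • v⟫ = ‖v‖⁻¹ * f z := fun z => by
    rw [real_inner_smul_right, real_inner_comm, hfv]
  have hv0 : v ≠ 0 := by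
    rintro h0
    obtain ⟨b, hb⟩ := hAne
    simpa [hfv, h0] using hfy.trans (hfA b hb)
  refine ⟨‖v‖⁻¹ • v, norm_smul_inv_norm hv0, ?_⟩
  calc ⟪y, ‖v‖⁻¹ • v⟫ < ‖v‖⁻¹ * u := by rw [hv]; gcongr
    _ ≤ suppFun A (‖v‖⁻¹ • v) := le_csInf (hAne.image _) <| by
      rintro _ ⟨z, hz, rfl⟩
      show ‖v‖⁻¹ * u ≤ ⟪z, ‖v‖⁻¹ • v⟫
      rw [hv]
      gcongr
      exact (hfA z hz).le

theorem mem_of_forall_suppFun_le (hAc : IsClosed A) (hAconv : Convex ℝ A) (hAne : A.Nonempty)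
    {y : EuclideanSpace ℝ (Fin d)} (h : ∀ x, ‖x‖ = 1 → suppFun A x ≤ ⟪y, x⟫) : y ∈ A := by
  by_contra hy
  obtain ⟨x, hx, hlt⟩ := exists_norm_eq_one_inner_lt_suppFun hAc hAconv hAne hy
  exact (h x hx).not_gt hlt

end SupportFunction

theorem stmt3_general {d : ℕ} (Δ : Set (EuclideanSpace ℝ (Fin d)))
    (Δn : ℕ → Set (EuclideanSpace ℝ (Fin d)))
    (hΔc : IsCompact Δ)
    (hne : ∀ n, (Δn n).Nonempty) (hc : ∀ n, IsCompact (Δn n))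
    (hconv : ∀ n, Convex ℝ (Δn n))
    (hunif : ∀ ε > (0 : ℝ), ∃ N, ∀ n ≥ N, ∀ x : EuclideanSpace ℝ (Fin d), ‖x‖ ≤ 1 →
        |suppFun (Δn n) x - suppFun Δ x| ≤ ε) :
    ∀ ε > (0 : ℝ), ∃ N, ∀ n ≥ N,
      convexHull ℝ {y ∈ Δ | ε ≤ Metric.infDist y (frontier Δ)} ⊆ Δn n := by
  intro ε hε
  obtain ⟨N, hN⟩ := hunif ε hε
  refine ⟨N, fun n hn => convexHull_min ?_ (hconv n)⟩
  rintro y ⟨hyΔ, hyε⟩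
  have hball := hΔc.isClosed.closedBall_subset_of_le_infDist_frontier hyΔ hε hyε
  refine mem_of_forall_suppFun_le (hc n).isClosed (hconv n) (hne n) fun x hx => ?_
  have hclose := (abs_le.1 (hN n hn x hx.le)).2
  linarith [suppFun_le_inner_sub_of_closedBall_subset hΔc hε.le hball hx]

/-- **Inner approximation under C-norm convergence of support functions.**
If `Δ` has nonempty interior and the support functions of `Δn` converge to that
of `Δ` uniformly on the closed unit ball, then for every `ε > 0` the convex set
`Δ_ε = convexHull {y ∈ Δ : dist(y, frontier Δ) ≥ ε}` is eventually contained
in `Δn`. -/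
theorem stmt3 {d : ℕ} (Δ : Set (EuclideanSpace ℝ (Fin d)))
    (Δn : ℕ → Set (EuclideanSpace ℝ (Fin d)))
    (hΔne : Δ.Nonempty) (hΔc : IsCompact Δ) (hΔconv : Convex ℝ Δ)
    (hΔint : (interior Δ).Nonempty)
    (hne : ∀ n, (Δn n).Nonempty) (hc : ∀ n, IsCompact (Δn n))
    (hconv : ∀ n, Convex ℝ (Δn n))
    (hunif : ∀ ε > (0 : ℝ), ∃ N, ∀ n ≥ N, ∀ x : EuclideanSpace ℝ (Fin d), ‖x‖ ≤ 1 →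
        |suppFun (Δn n) x - suppFun Δ x| ≤ ε) :
    ∀ ε > (0 : ℝ), ∃ N, ∀ n ≥ N,
      convexHull ℝ {y ∈ Δ | ε ≤ Metric.infDist y (frontier Δ)} ⊆ Δn n :=
  stmt3_general Δ Δn hΔc hne hc hconv hunif
end

section
/- Let I be a type, δ : I → ℝ with 0 < δ_i ≤ 1 for all i, C ≥ 0 a real number, R ⊆ I a finite subset, Y a nonempty type, and θ : I → Y → ℝ a family of functions such that: θ_i(y) ≤ 0 for all i ∉ R and all y; θ_i(y) ≤ C for all i ∈ R and all y; and for every y the family (δ_i·θ_i(y))_{i∈I} is summable with ∑_{i∈I} δ_i·θ_i(y) ≥ 0. Then for every i ∈ I and every y ∈ Y one has |θ_i(y)| ≤ C·|R| / δ_i. -/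
open Finset

theorem tsum_le_sum_of_nonpos {ι : Type*} {f : ι → ℝ} (hf : Summable f) (s : Finset ι)
    (hs : ∀ i ∉ s, f i ≤ 0) : ∑' i, f i ≤ ∑ i ∈ s, f i := by
  have := hf.neg.sum_le_tsum s fun i hi => neg_nonneg.mpr (hs i hi)
  rwa [tsum_neg, sum_neg_distrib, neg_le_neg_iff] at this

/-- The terms other than `f i` contribute at most `C * #R` to a nonnegative sum. -/
theorem neg_mul_card_le_of_tsum_nonneg {ι : Type*} {f : ι → ℝ} (hf : Summable f)
    (hnn : 0 ≤ ∑' j, f j) {R : Finset ι} {C : ℝ} (hC : 0 ≤ C) (hout : ∀ j ∉ R, f j ≤ 0)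
    (hR : ∀ j ∈ R, f j ≤ C) (i : ι) : -(C * #R) ≤ f i := by
  classical
  have hrest : ∑ j ∈ R.erase i, f j ≤ C * #R :=
    calc ∑ j ∈ R.erase i, f j ≤ #(R.erase i) • C :=
          sum_le_card_nsmul _ _ _ fun j hj => hR j (mem_of_mem_erase hj)
      _ ≤ #R • C := nsmul_le_nsmul_left hC card_erase_le
      _ = C * #R := by rw [nsmul_eq_mul, mul_comm]
  have hsum : 0 ≤ f i + ∑ j ∈ R.erase i, f j :=
    calc 0 ≤ ∑' j, f j := hnn
      _ ≤ ∑ j ∈ insert i R, f j :=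
          tsum_le_sum_of_nonpos hf _ fun j hj => hout j fun hjR => hj (mem_insert_of_mem hjR)
      _ = f i + ∑ j ∈ R.erase i, f j := by
          rw [← add_sum_erase _ _ (mem_insert_self i R), erase_insert_eq_erase]
  linarith

theorem mul_le_of_le_one_of_le_of_nonneg {δ θ C : ℝ} (hδ₀ : 0 ≤ δ) (hδ₁ : δ ≤ 1) (hθ : θ ≤ C)
    (hC : 0 ≤ C) : δ * θ ≤ C := by
  rcases le_total θ 0 with hθ₀ | hθ₀
  · exact (mul_nonpos_of_nonneg_of_nonpos hδ₀ hθ₀).trans hC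
  · exact (mul_le_of_le_one_left hθ₀ hδ₁).trans hθ

theorem stmt6_general {I : Type*} (δ : I → ℝ) (hδ : ∀ i, 0 < δ i ∧ δ i ≤ 1)
    (C : ℝ) (hC : 0 ≤ C) (R : Finset I) {Y : Type*}
    (θ : I → Y → ℝ)
    (houtside : ∀ i ∉ R, ∀ y : Y, θ i y ≤ 0)
    (hbound : ∀ i ∈ R, ∀ y : Y, θ i y ≤ C)
    (hsum : ∀ y : Y, Summable (fun i => δ i * θ i y) ∧ 0 ≤ ∑' i, δ i * θ i y) :
    ∀ (i : I) (y : Y), |θ i y| ≤ C * R.card / δ i := by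
  intro i y
  obtain ⟨hδ₀, hδ₁⟩ := hδ i
  have hlow : -(C * #R) ≤ δ i * θ i y :=
    neg_mul_card_le_of_tsum_nonneg (hsum y).1 (hsum y).2 hC
      (fun j hj => mul_nonpos_of_nonneg_of_nonpos (hδ j).1.le (houtside j hj y))
      (fun j hj => mul_le_of_le_one_of_le_of_nonneg (hδ j).1.le (hδ j).2 (hbound j hj y) hC) i
  have hup : θ i y ≤ C * #R := by
    by_cases hi : i ∈ R
    · exact (hbound i hi y).trans <|
        le_mul_of_one_le_right hC (Nat.one_le_cast.mpr (card_pos.mpr ⟨i, hi⟩))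
    · exact (houtside i hi y).trans (by positivity)
  refine abs_le.mpr ⟨?_, hup.trans (le_div_self (by positivity) hδ₀ hδ₁)⟩
  rw [← neg_div, div_le_iff₀ hδ₀]
  linarith

/-- **Uniform boundedness of the members of a weighted family with nonnegative sums.**
If `0 < δ i ≤ 1`, each `θ i` is `≤ 0` outside a finite index set `R` and `≤ C`
on `R`, and at every point the weighted family `(δ i * θ i y)` is summable with
nonnegative sum, then `|θ i y| ≤ C * |R| / δ i` for every `i` and `y`. -/
theorem stmt6 {I : Type*} (δ : I → ℝ) (hδ : ∀ i, 0 < δ i ∧ δ i ≤ 1)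
    (C : ℝ) (hC : 0 ≤ C) (R : Finset I) {Y : Type*} [Nonempty Y]
    (θ : I → Y → ℝ)
    (houtside : ∀ i ∉ R, ∀ y : Y, θ i y ≤ 0)
    (hbound : ∀ i ∈ R, ∀ y : Y, θ i y ≤ C)
    (hsum : ∀ y : Y, Summable (fun i => δ i * θ i y) ∧ 0 ≤ ∑' i, δ i * θ i y) :
    ∀ (i : I) (y : Y), |θ i y| ≤ C * R.card / δ i :=
  stmt6_general δ hδ C hC R θ houtside hbound hsum
end

section
/- Define θ : ℕ → ℝ → ℝ by θ(0)(y) = 1 and θ(n)(y) = min(y − 2^{−n}, 0) for n ≥ 1. Then for every y ∈ [0,1] the series ∑_{n=0}^∞ θ(n)(y) converges absolutely to a value F(y); F(0) = 0; for every n ∈ ℕ and every y with 2^{−(n+1)} ≤ y ≤ 2^{−n} one has F(y) = n·y + 2^{−n}; and F(y) ≥ 0 for all y ∈ [0,1]. -/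
/-!
For `n ≥ 1` the summand `min (y - 2⁻ⁿ) 0` is bounded by `2⁻ⁿ` in absolute value, so the series
converges absolutely, and it vanishes as soon as `2⁻ⁿ ≤ y`. Hence for `2⁻⁽ⁿ⁺¹⁾ ≤ y ≤ 2⁻ⁿ` only the
summands `1` and `y - 2⁻ᵏ`, `1 ≤ k ≤ n`, survive, and a finite geometric sum gives `n y + 2⁻ⁿ`;
this is nonnegative, and every `y ∈ (0, 1]` lies in such a dyadic interval. At `y = 0` all summands
are nonzero and the full geometric series gives `1 - 1 = 0`.
-/

open Finset

noncomputable def roofTerm (n : ℕ) (y : ℝ) : ℝ := min (y - 2⁻¹ ^ n) 0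

lemma roofTerm_of_pow_le {n : ℕ} {y : ℝ} (h : 2⁻¹ ^ n ≤ y) : roofTerm n y = 0 :=
  min_eq_right (sub_nonneg.2 h)

lemma roofTerm_of_le_pow {n : ℕ} {y : ℝ} (h : y ≤ 2⁻¹ ^ n) : roofTerm n y = y - 2⁻¹ ^ n :=
  min_eq_left (sub_nonpos.2 h)

lemma abs_roofTerm_le (n : ℕ) {y : ℝ} (hy : 0 ≤ y) : |roofTerm n y| ≤ 2⁻¹ ^ n := by
  have hpos : (0 : ℝ) < 2⁻¹ ^ n := by positivity
  exact abs_le.2 ⟨le_min (by linarith) (neg_nonpos.2 hpos.le), (min_le_right _ _).trans hpos.le⟩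

lemma sum_range_inv_two_pow_succ (n : ℕ) :
    ∑ k ∈ range n, (2⁻¹ : ℝ) ^ (k + 1) = 1 - 2⁻¹ ^ n := by
  induction n with
  | zero => simp
  | succ n ih => rw [sum_range_succ, ih, pow_succ]; ring

lemma tsum_inv_two_pow_succ : ∑' k : ℕ, (2⁻¹ : ℝ) ^ (k + 1) = 1 := by
  simp only [pow_succ, tsum_mul_right, tsum_geometric_inv_two]
  norm_num

lemma tsum_roofTerm_succ_zero : ∑' k, roofTerm (k + 1) 0 = -1 := by
  have hterm (k : ℕ) : roofTerm (k + 1) 0 = -2⁻¹ ^ (k + 1) := by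
    rw [roofTerm_of_le_pow (by positivity), zero_sub]
  rw [tsum_congr hterm, tsum_neg, tsum_inv_two_pow_succ]

lemma tsum_roofTerm_succ_of_mem {n : ℕ} {y : ℝ} (hlo : 2⁻¹ ^ (n + 1) ≤ y) (hhi : y ≤ 2⁻¹ ^ n) :
    ∑' k, roofTerm (k + 1) y = n * y - (1 - 2⁻¹ ^ n) := by
  have hvanish : ∀ k ∉ range n, roofTerm (k + 1) y = 0 := fun k hk =>
    roofTerm_of_pow_le <| (pow_le_pow_of_le_one (by norm_num) (by norm_num)
      (by simpa using hk)).trans hlo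
  have hlinear : ∀ k ∈ range n, roofTerm (k + 1) y = y - 2⁻¹ ^ (k + 1) := fun k hk =>
    roofTerm_of_le_pow <| hhi.trans <| pow_le_pow_of_le_one (by norm_num) (by norm_num)
      (mem_range.1 hk)
  rw [tsum_eq_sum hvanish, sum_congr rfl hlinear, sum_sub_distrib, sum_const, card_range,
    nsmul_eq_mul, sum_range_inv_two_pow_succ]

section Roof

variable {θ : ℕ → ℝ → ℝ} (h0 : ∀ y, θ 0 y = 1) (hθ : ∀ n y, θ (n + 1) y = roofTerm (n + 1) y)
include h0 hθ

lemma summable_abs_roof {y : ℝ} (hy : 0 ≤ y) : Summable fun n => |θ n y| := by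
  refine (summable_geometric_of_lt_one (r := (2⁻¹ : ℝ)) (by norm_num) (by norm_num)).of_nonneg_of_le
    (fun n => abs_nonneg _) fun n => ?_
  cases n with
  | zero => simp [h0]
  | succ n => exact hθ n y ▸ abs_roofTerm_le _ hy

lemma tsum_roof_eq {y : ℝ} (hy : 0 ≤ y) : ∑' n, θ n y = 1 + ∑' k, roofTerm (k + 1) y := by
  rw [(summable_abs_roof h0 hθ hy).of_abs.tsum_eq_zero_add, h0]
  simp only [hθ]

lemma tsum_roof_zero : ∑' n, θ n 0 = 0 := by
  rw [tsum_roof_eq h0 hθ le_rfl, tsum_roofTerm_succ_zero]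
  norm_num

lemma tsum_roof_of_mem {n : ℕ} {y : ℝ} (hlo : 2⁻¹ ^ (n + 1) ≤ y) (hhi : y ≤ 2⁻¹ ^ n) :
    ∑' k, θ k y = n * y + 2⁻¹ ^ n := by
  rw [tsum_roof_eq h0 hθ ((pow_nonneg (by norm_num) _).trans hlo),
    tsum_roofTerm_succ_of_mem hlo hhi]
  ring

end Roof

lemma two_zpow_neg_natCast (n : ℕ) : (2 : ℝ) ^ (-(n : ℤ)) = 2⁻¹ ^ n := by
  rw [zpow_neg, zpow_natCast, inv_pow]

lemma two_zpow_neg_natCast_sub_one (n : ℕ) : (2 : ℝ) ^ (-(n : ℤ) - 1) = 2⁻¹ ^ (n + 1) := by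
  rw [← two_zpow_neg_natCast]
  push_cast
  ring_nf

/-- **The global roof function of the first example of Section 6.**
With `θ 0 y = 1` and `θ n y = min (y − 2^{−n}) 0` for `n ≥ 1`: the series
`∑ n, θ n y` converges absolutely for every `y ∈ [0, 1]`; its sum `F` satisfies
`F 0 = 0`, `F y = n y + 2^{−n}` for `2^{−(n+1)} ≤ y ≤ 2^{−n}`, and `F ≥ 0` on
`[0, 1]`. -/
theorem stmt11 (θ : ℕ → ℝ → ℝ) (h0 : ∀ y : ℝ, θ 0 y = 1)
    (hn : ∀ n : ℕ, n ≠ 0 → ∀ y : ℝ, θ n y = min (y - (2 : ℝ) ^ (-(n : ℤ))) 0) :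
    (∀ y ∈ Set.Icc (0 : ℝ) 1, Summable fun n => |θ n y|) ∧
      (∑' n, θ n 0) = 0 ∧
      (∀ n : ℕ, ∀ y : ℝ, (2 : ℝ) ^ (-(n : ℤ) - 1) ≤ y → y ≤ (2 : ℝ) ^ (-(n : ℤ)) →
        (∑' k, θ k y) = n * y + (2 : ℝ) ^ (-(n : ℤ))) ∧
      (∀ y ∈ Set.Icc (0 : ℝ) 1, 0 ≤ ∑' n, θ n y) := by
  have hθ (n : ℕ) (y : ℝ) : θ (n + 1) y = roofTerm (n + 1) y := by
    rw [hn _ n.succ_ne_zero, two_zpow_neg_natCast]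
    rfl
  refine ⟨fun y hy => summable_abs_roof h0 hθ hy.1, tsum_roof_zero h0 hθ, fun n y hlo hhi => ?_,
    ?_⟩
  · rw [two_zpow_neg_natCast_sub_one] at hlo
    rw [two_zpow_neg_natCast] at hhi ⊢
    exact tsum_roof_of_mem h0 hθ hlo hhi
  · rintro y ⟨hy0, hy1⟩
    rcases hy0.eq_or_lt with rfl | hpos
    · exact (tsum_roof_zero h0 hθ).ge
    obtain ⟨n, hlo, hhi⟩ := exists_nat_pow_near_of_lt_one hpos hy1 (by norm_num)
      (by norm_num : (2⁻¹ : ℝ) < 1)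
    rw [tsum_roof_of_mem h0 hθ hlo.le hhi]
    positivity
end

section
/- With θ : ℕ → ℝ → ℝ given by θ(0)(y) = 1 and θ(n)(y) = min(y − 2^{−n}, 0) for n ≥ 1, the series of integrals ∑_{n=0}^∞ ∫_0^1 θ(n)(y) dy converges and 2·∑_{n=0}^∞ ∫_0^1 θ(n)(y) dy = 5/3. In particular, ∫_0^1 θ(n)(y) dy = −2^{−2n−1} for every n ≥ 1. -/
open MeasureTheory

/-! For `n ≥ 1` the integrand is the ramp `min (y - c) 0` with `c = 2^{-n} ∈ [0, 1]`, whose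
integral over `[0, 1]` is the area `-c²/2 = -2^{-2n-1}` of a triangle. Hence the series is
`1` plus a geometric series of ratio `1/4`: `1 - (1/8)/(1 - 1/4) = 5/6`. -/

theorem intervalIntegral_min_sub_zero {a b c : ℝ} (hac : a ≤ c) (hcb : c ≤ b) :
    ∫ y in a..b, min (y - c) 0 = -((c - a) ^ 2 / 2) := by
  have hcont : Continuous fun y : ℝ => min (y - c) 0 := by fun_prop
  have hleft : ∫ y in a..c, min (y - c) 0 = ∫ y in a..c, (y - c) :=
    intervalIntegral.integral_congr fun y hy => by
      rw [Set.uIcc_of_le hac] at hy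
      exact min_eq_left (sub_nonpos.2 hy.2)
  have hright : ∫ y in c..b, min (y - c) 0 = ∫ _ in c..b, (0 : ℝ) :=
    intervalIntegral.integral_congr fun y hy => by
      rw [Set.uIcc_of_le hcb] at hy
      exact min_eq_right (sub_nonneg.2 hy.1)
  rw [← intervalIntegral.integral_add_adjacent_intervals (hcont.intervalIntegrable a c)
    (hcont.intervalIntegrable c b), hleft, hright, intervalIntegral.integral_zero,
    intervalIntegral.integral_comp_sub_right (fun y => y), integral_id]
  ring

theorem intervalIntegral_min_sub_two_zpow_neg (n : ℕ) :
    ∫ y in (0 : ℝ)..1, min (y - (2 : ℝ) ^ (-(n : ℤ))) 0 = -(2 : ℝ) ^ (-2 * (n : ℤ) - 1) := by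
  have hpos : (0 : ℝ) ≤ 2 ^ (-(n : ℤ)) := by positivity
  have hle : (2 : ℝ) ^ (-(n : ℤ)) ≤ 1 := zpow_le_one_of_nonpos₀ one_le_two (by omega)
  rw [intervalIntegral_min_sub_zero hpos hle, sub_zero, ← zpow_natCast, ← zpow_mul,
    show -2 * (n : ℤ) - 1 = -(n : ℤ) * (2 : ℕ) + -1 by ring, zpow_add₀ two_ne_zero]
  ring

theorem hasSum_neg_two_zpow_succ :
    HasSum (fun n : ℕ => -(2 : ℝ) ^ (-2 * ((n + 1 : ℕ) : ℤ) - 1)) (-1 / 6) := by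
  have hterm : ∀ n : ℕ, -(2 : ℝ) ^ (-2 * ((n + 1 : ℕ) : ℤ) - 1) = -1 / 8 * (1 / 4) ^ n := by
    intro n
    rw [show -2 * ((n + 1 : ℕ) : ℤ) - 1 = -3 + -2 * (n : ℤ) by push_cast; ring,
      zpow_add₀ two_ne_zero, zpow_mul, zpow_natCast]
    norm_num
  have hgeom := (hasSum_geometric_of_lt_one (r := (1 / 4 : ℝ)) (by norm_num)
    (by norm_num)).mul_left (-1 / 8)
  rwa [show (-1 / 8 * (1 - 1 / 4)⁻¹ : ℝ) = -1 / 6 by norm_num, ← funext hterm] at hgeom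

/-- **The arithmetic self-intersection number `D̄² = 5/3` of the first example
of Section 6.**  With `θ 0 y = 1` and `θ n y = min (y − 2^{−n}) 0` for `n ≥ 1`,
the series of integrals `∑ n, ∫_0^1 θ n` converges, twice its sum equals `5/3`,
and `∫_0^1 θ n = −2^{−2n−1}` for every `n ≥ 1`. -/
theorem stmt12 (θ : ℕ → ℝ → ℝ) (h0 : ∀ y : ℝ, θ 0 y = 1)
    (hn : ∀ n : ℕ, n ≠ 0 → ∀ y : ℝ, θ n y = min (y - (2 : ℝ) ^ (-(n : ℤ))) 0) :
    Summable (fun n : ℕ => ∫ y in (0 : ℝ)..1, θ n y) ∧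
      2 * (∑' n : ℕ, ∫ y in (0 : ℝ)..1, θ n y) = 5 / 3 ∧
      ∀ n : ℕ, n ≠ 0 → (∫ y in (0 : ℝ)..1, θ n y) = -(2 : ℝ) ^ (-2 * (n : ℤ) - 1) := by
  have hθ : ∀ n : ℕ, n ≠ 0 →
      (∫ y in (0 : ℝ)..1, θ n y) = -(2 : ℝ) ^ (-2 * (n : ℤ) - 1) := fun n hn0 => by
    rw [intervalIntegral.integral_congr fun y _ => hn n hn0 y,
      intervalIntegral_min_sub_two_zpow_neg]
  have htail : (fun n : ℕ => ∫ y in (0 : ℝ)..1, θ (n + 1) y) =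
      fun n : ℕ => -(2 : ℝ) ^ (-2 * ((n + 1 : ℕ) : ℤ) - 1) :=
    funext fun n => hθ (n + 1) n.succ_ne_zero
  have hsum : HasSum (fun n : ℕ => ∫ y in (0 : ℝ)..1, θ n y) (5 / 6) := by
    have h := hasSum_neg_two_zpow_succ
    rw [← htail, hasSum_nat_add_iff (f := fun n => ∫ y in (0 : ℝ)..1, θ n y) 1] at h
    rwa [Finset.sum_range_one, intervalIntegral.integral_congr fun y _ => h0 y,
      intervalIntegral.integral_const, smul_eq_mul, mul_one, sub_zero,
      show (-1 / 6 + 1 : ℝ) = 5 / 6 by norm_num] at h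
  exact ⟨hsum.summable, by rw [hsum.tsum_eq]; norm_num, hθ⟩
end

section
/- For every real α < 0 and every real c > 0, the function f : ℝ² → ℝ given by f(y) = min(0, 1 − c·(1 − ‖y‖)^α) is concave on the open Euclidean unit ball {y ∈ ℝ² : ‖y‖ < 1}, where (1−‖y‖)^α denotes the real power and ‖·‖ is the Euclidean norm. -/
/-!
The profile `r ↦ min 0 (1 - c (1 - r)^α)` is concave and antitone on `r < 1`, because
`x ↦ x^α = exp (α log x)` is convex for `α ≤ 0`. A concave antitone function of a convex
function is concave, and the norm is convex.
-/

open Set Real Metric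

section Composition

variable {𝕜 E β γ : Type*} [Semiring 𝕜] [PartialOrder 𝕜] [AddCommMonoid E] [SMul 𝕜 E]
  [AddCommMonoid β] [PartialOrder β] [SMul 𝕜 β] [AddCommMonoid γ] [PartialOrder γ] [SMul 𝕜 γ]
  {s : Set E} {t : Set β} {f : E → β} {g : β → γ}

theorem ConvexOn.comp_of_mapsTo (hg : ConvexOn 𝕜 t g) (hf : ConvexOn 𝕜 s f)
    (hg' : MonotoneOn g t) (hst : MapsTo f s t) : ConvexOn 𝕜 s (g ∘ f) :=
  ⟨hf.1, fun _ hx _ hy _ _ ha hb hab =>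
    (hg' (hst (hf.1 hx hy ha hb hab)) (hg.1 (hst hx) (hst hy) ha hb hab)
      (hf.2 hx hy ha hb hab)).trans (hg.2 (hst hx) (hst hy) ha hb hab)⟩

theorem ConcaveOn.comp_convexOn_of_mapsTo (hg : ConcaveOn 𝕜 t g) (hf : ConvexOn 𝕜 s f)
    (hg' : AntitoneOn g t) (hst : MapsTo f s t) : ConcaveOn 𝕜 s (g ∘ f) :=
  hg.dual.comp_of_mapsTo hf hg' hst

end Composition

theorem convexOn_rpow_of_nonpos {p : ℝ} (hp : p ≤ 0) :
    ConvexOn ℝ (Ioi 0) fun x : ℝ => x ^ p := by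
  have hlog : ConvexOn ℝ (Ioi 0) fun x => p * log x := by
    simpa using strictConcaveOn_log_Ioi.concaveOn.neg.smul (neg_nonneg.2 hp)
  refine (convexOn_exp.comp_of_mapsTo hlog (exp_monotone.monotoneOn _) (mapsTo_univ _ _)).congr ?_
  intro x hx
  simp [rpow_def_of_pos hx, mul_comm]

theorem convexOn_one_sub_rpow_of_nonpos {p : ℝ} (hp : p ≤ 0) :
    ConvexOn ℝ (Iio 1) fun r : ℝ => (1 - r) ^ p := by
  have h := (convexOn_rpow_of_nonpos hp).comp_affineMap (AffineMap.const ℝ ℝ 1 - AffineMap.id ℝ ℝ)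
  have hpre : ⇑(AffineMap.const ℝ ℝ (1 : ℝ) - AffineMap.id ℝ ℝ) ⁻¹' Ioi 0 = Iio 1 := by ext; simp
  rwa [hpre] at h

/-- The radial part `θ(r)` of the roof function `θ_{v(n)}`, with `c = 2^{nα}`. -/
noncomputable def roofProfile (α c r : ℝ) : ℝ := min 0 (1 - c * (1 - r) ^ α)

section RoofProfile

variable {α c : ℝ}

theorem concaveOn_roofProfile (hα : α ≤ 0) (hc : 0 ≤ c) :
    ConcaveOn ℝ (Iio 1) (roofProfile α c) := by
  have h := ((convexOn_one_sub_rpow_of_nonpos hα).smul hc).neg.add_const 1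
  refine ((concaveOn_const 0 (convex_Iio 1)).inf h).congr fun r _ => ?_
  simp [roofProfile, sub_eq_neg_add]

theorem antitoneOn_roofProfile (hα : α ≤ 0) (hc : 0 ≤ c) :
    AntitoneOn (roofProfile α c) (Iio 1) := by
  intro r _ s hs hrs
  have hpow : (1 - r) ^ α ≤ (1 - s) ^ α :=
    rpow_le_rpow_of_nonpos (sub_pos.2 hs) (by linarith) hα
  exact min_le_min le_rfl (by nlinarith)

theorem concaveOn_ball_roofProfile_norm {E : Type*} [SeminormedAddCommGroup E] [NormedSpace ℝ E]
    (hα : α ≤ 0) (hc : 0 ≤ c) :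
    ConcaveOn ℝ (ball (0 : E) 1) fun y => roofProfile α c ‖y‖ :=
  (concaveOn_roofProfile hα hc).comp_convexOn_of_mapsTo (convexOn_norm (convex_ball 0 1))
    (antitoneOn_roofProfile hα hc) fun _ hy => mem_ball_zero_iff.1 hy

end RoofProfile

/-- **Concavity of the radial roof functions of Example 6.10.**
For `α < 0` and `c > 0`, the function `y ↦ min 0 (1 − c (1 − ‖y‖)^α)` (real power)
is concave on the open Euclidean unit ball in `ℝ²`. -/
theorem stmt16 (α c : ℝ) (hα : α < 0) (hc : 0 < c) :
    ConcaveOn ℝ (Metric.ball (0 : EuclideanSpace ℝ (Fin 2)) 1)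
      (fun y => min 0 (1 - c * (1 - ‖y‖) ^ α)) :=
  concaveOn_ball_roofProfile_norm hα.le hc.le
end
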